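/- Let q1 = (√κ − n^{1/4})/(√κ + n^{1/4}) and x* ∈ ℝ^d be the vector whose ((i−1)p+j)-th coordinate equals q1^j for every i = 1,…,n and j = 1,…,p. Then x* is a global minimizer of F, i.e. F(x*) ≤ F(y) for all y ∈ ℝ^d (equivalently, ∇F(x*) = 0). -/

import Mathlib

open Finset
open scoped RealInnerProductSpace

/-- The `p × p` tridiagonal matrix with diagonal entries `2` except the last one, which is `ξ`,
and `-1` on the sub- and super-diagonal. -/
noncomputable def Tmat (p : ℕ) (ξ : ℝ) : Matrix (Fin p) (Fin p) ℝ :=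
  fun j k =>
    if j = k then (if (j : ℕ) = p - 1 then ξ else 2)
    else if (j : ℕ) + 1 = (k : ℕ) ∨ (k : ℕ) + 1 = (j : ℕ) then -1 else 0

/-- The `d × d` matrix (`d = np`, coordinates indexed by `Fin n × Fin p`) which is zero outside
the `i`-th diagonal `p × p` block, and whose `i`-th diagonal block is `Tmat p ξ`. -/
noncomputable def Amat (n p : ℕ) (ξ : ℝ) (i : Fin n) :
    Matrix (Fin n × Fin p) (Fin n × Fin p) ℝ :=
  fun a b => if a.1 = i ∧ b.1 = i then Tmat p ξ a.2 b.2 else 0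

/-- The `d × d` diagonal matrix which is the orthogonal projection onto the coordinates
of the `i`-th block of `p` coordinates. -/
noncomputable def Bmat (n p : ℕ) (i : Fin n) :
    Matrix (Fin n × Fin p) (Fin n × Fin p) ℝ :=
  fun a b => if a = b ∧ a.1 = i then 1 else 0

/-- The component function
`f_i(x) = ((√n L − nμ)/4) ((1/2)⟨x, A_i x⟩ − ⟨e_{(i−1)p+1}, x⟩) + (nμ/2)⟨x, B_i x⟩`. -/
noncomputable def fComp2 (n p : ℕ) [NeZero p] (L μ ξ : ℝ) (i : Fin n)
    (x : EuclideanSpace ℝ (Fin n × Fin p)) : ℝ :=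
  ((Real.sqrt n * L - n * μ) / 4) *
      ((1 / 2) * (∑ a : Fin n × Fin p, ∑ b : Fin n × Fin p, x a * Amat n p ξ i a b * x b)
        - x (i, 0)) +
    (n * μ / 2) * (∑ a : Fin n × Fin p, ∑ b : Fin n × Fin p, x a * Bmat n p i a b * x b)

/-!
Each `f_i` only sees the `i`-th block `u` of `x`, on which it is the quadratic
`½ ⟨u, M u⟩ - ⟨b, u⟩` with `M = c T + nμ I`, `c = (√n L - nμ)/4 ≥ 0` and `b = c e₁`.
The tridiagonal `T` has nonpositive off-diagonal entries and nonnegative row sums (as `ξ ≥ 1`),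
so it is positive semidefinite by Gershgorin's theorem, hence so is `M`, and the quadratic is
minimized at any solution of `M w = b`. The geometric vector `w_j = q1^j` is one: with
`s = √κ` and `t = n^{1/4}`, every row but the last reduces to `c (1 - q1)² = nμ q1` (in the
first row the entry `c` of `b` plays the missing neighbour `q1^0`), and the last row to
`c (1 - ξ q1) = nμ q1`; both are rational identities in `s` and `t`.
-/

open Matrix

theorem Matrix.IsHermitian.posSemidef_of_offDiag_nonpos_of_mulVec_one_nonneg {ι : Type*}
    [Fintype ι] [DecidableEq ι] {A : Matrix ι ι ℝ} (hA : A.IsHermitian)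
    (hoff : ∀ j k, j ≠ k → A j k ≤ 0) (hrow : ∀ j, 0 ≤ (A *ᵥ 1) j) : A.PosSemidef := by
  refine hA.posSemidef_iff_eigenvalues_nonneg.mpr fun i => show 0 ≤ _ from ?_
  have hev : Module.End.HasEigenvalue (toLin' A) (hA.eigenvalues i) :=
    Module.End.hasEigenvalue_of_hasEigenvector
      ⟨Module.End.mem_eigenspace_iff.mpr (by simpa using hA.mulVec_eigenvectorBasis i),
        (WithLp.ofLp_eq_zero 2).ne.2 <| hA.eigenvectorBasis.orthonormal.ne_zero i⟩
  obtain ⟨k, hk⟩ := eigenvalue_mem_ball hev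
  have hradius : ∑ j ∈ univ.erase k, ‖A k j‖ = A k k - (A *ᵥ 1) k := by
    rw [mulVec, dotProduct, ← add_sum_erase _ _ (mem_univ k)]
    simp only [Pi.one_apply, mul_one, sub_add_cancel_left, ← sum_neg_distrib]
    refine sum_congr rfl fun j hj => ?_
    rw [Real.norm_eq_abs, abs_of_nonpos (hoff k j (ne_of_mem_erase hj).symm)]
  rw [Metric.mem_closedBall, Real.dist_eq, hradius] at hk
  linarith [neg_abs_le (hA.eigenvalues i - A k k), hrow k]

theorem Matrix.PosSemidef.quadratic_le_of_mulVec_eq {ι : Type*} [Fintype ι] {M : Matrix ι ι ℝ}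
    (hM : M.PosSemidef) {w b : ι → ℝ} (hw : M *ᵥ w = b) (u : ι → ℝ) :
    1 / 2 * (w ⬝ᵥ M *ᵥ w) - b ⬝ᵥ w ≤ 1 / 2 * (u ⬝ᵥ M *ᵥ u) - b ⬝ᵥ u := by
  obtain ⟨h, rfl⟩ : ∃ h, u = w + h := ⟨u - w, by abel⟩
  have hsymm : w ⬝ᵥ M *ᵥ h = h ⬝ᵥ b := by
    rw [dotProduct_mulVec, ← mulVec_transpose, ← conjTranspose_eq_transpose_of_trivial,
      hM.isHermitian.eq, dotProduct_comm, hw]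
  have hh : 0 ≤ h ⬝ᵥ M *ᵥ h := by simpa using hM.dotProduct_mulVec_nonneg h
  simp only [mulVec_add, dotProduct_add, add_dotProduct, hsymm, hw, dotProduct_comm b h]
  linarith

theorem Tmat_isHermitian (p : ℕ) (ξ : ℝ) : (Tmat p ξ).IsHermitian := by
  ext j k
  simp only [conjTranspose_apply, star_trivial, Tmat, eq_comm (a := k), or_comm]
  split_ifs <;> simp_all

theorem sum_range_ite_add_one_eq (p j : ℕ) (f : ℕ → ℝ) :
    ∑ k ∈ Finset.range p, (if k + 1 = j then f k else 0)
      = if 1 ≤ j ∧ j ≤ p then f (j - 1) else 0 := by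
  cases j with
  | zero => simp
  | succ j =>
    simp only [Nat.add_right_cancel_iff, Finset.sum_ite_eq', Finset.mem_range]
    split_ifs <;> first | rfl | omega

theorem Tmat_mulVec_apply (p : ℕ) (ξ : ℝ) (f : ℕ → ℝ) (j : Fin p) :
    (Tmat p ξ *ᵥ fun k => f k) j = (if (j : ℕ) = p - 1 then ξ else 2) * f j
      - (if 1 ≤ (j : ℕ) then f (j - 1) else 0) - (if (j : ℕ) + 1 < p then f (j + 1) else 0) := by
  have hentry : ∀ k : Fin p, Tmat p ξ j k * f k =
      (if (k : ℕ) = j then (if (j : ℕ) = p - 1 then ξ else 2) * f k else 0)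
        - (if (k : ℕ) + 1 = j then f k else 0) - (if (k : ℕ) = j + 1 then f k else 0) := by
    intro k
    simp only [Tmat, Fin.ext_iff]
    split_ifs <;> first | ring1 | omega
  simp only [mulVec, dotProduct, hentry, sum_sub_distrib]
  rw [Fin.sum_univ_eq_sum_range (fun k => if k = (j : ℕ) then _ * f k else 0),
    Fin.sum_univ_eq_sum_range (fun k => if k + 1 = (j : ℕ) then f k else 0),
    Fin.sum_univ_eq_sum_range (fun k => if k = (j : ℕ) + 1 then f k else 0),
    sum_ite_eq', sum_ite_eq', sum_range_ite_add_one_eq]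
  have := j.isLt
  simp only [mem_range]
  split_ifs <;> first | rfl | omega

theorem Tmat_posSemidef (p : ℕ) {ξ : ℝ} (hξ : 1 ≤ ξ) : (Tmat p ξ).PosSemidef := by
  refine (Tmat_isHermitian p ξ).posSemidef_of_offDiag_nonpos_of_mulVec_one_nonneg
    (fun j k hjk => ?_) (fun j => ?_)
  · simp only [Tmat, if_neg hjk]
    split_ifs <;> norm_num
  · have := Tmat_mulVec_apply p ξ (fun _ => 1) j
    rw [show (1 : Fin p → ℝ) = fun _ => 1 from rfl, this]
    have := j.isLt
    split_ifs <;> first | omega | linarith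

theorem Tmat_mulVec_geometric {p : ℕ} [NeZero p] {c e q ξ : ℝ}
    (hinner : c * (2 * q - 1 - q ^ 2) + e * q = 0) (hlast : c * (ξ * q - 1) + e * q = 0) :
    (c • Tmat p ξ + e • 1) *ᵥ (fun j : Fin p => q ^ ((j : ℕ) + 1)) = Pi.single 0 c := by
  ext j
  rw [add_mulVec, smul_mulVec, smul_mulVec, one_mulVec, Pi.add_apply, Pi.smul_apply,
    Pi.smul_apply, Tmat_mulVec_apply p ξ (fun k => q ^ (k + 1)), Pi.single_apply, smul_eq_mul,
    smul_eq_mul]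
  simp only [Fin.ext_iff, Fin.val_zero]
  rcases j with ⟨_ | m, hm⟩
  · simp only [Nat.zero_add, pow_one, if_true]
    split_ifs <;> try omega
    · linear_combination hlast
    · linear_combination hinner
  · simp only [Nat.add_sub_cancel, Nat.succ_ne_zero, if_false]
    split_ifs <;> try omega
    · linear_combination q ^ (m + 1) * hlast
    · linear_combination q ^ (m + 1) * hinner

theorem sum_sum_mul_Amat_mul (n p : ℕ) (ξ : ℝ) (i : Fin n) (v : Fin n × Fin p → ℝ) :
    ∑ a, ∑ b, v a * Amat n p ξ i a b * v b
      = (fun j => v (i, j)) ⬝ᵥ Tmat p ξ *ᵥ fun j => v (i, j) := by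
  simp only [dotProduct, mulVec, Fintype.sum_prod_type, Finset.mul_sum, Amat]
  rw [Finset.sum_eq_single i (fun b _ hb => by simp [hb]) (by simp)]
  refine Finset.sum_congr rfl fun j _ => ?_
  rw [Finset.sum_eq_single i (fun b _ hb => by simp [hb]) (by simp)]
  simp only [and_self, if_true, mul_assoc]

theorem sum_sum_mul_Bmat_mul (n p : ℕ) (i : Fin n) (v : Fin n × Fin p → ℝ) :
    ∑ a, ∑ b, v a * Bmat n p i a b * v b = (fun j => v (i, j)) ⬝ᵥ fun j => v (i, j) := by
  have hdiag : ∀ a, ∑ b, v a * Bmat n p i a b * v b = if a.1 = i then v a * v a else 0 :=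
    fun a => by
      rw [Finset.sum_eq_single a (fun b _ hb => by simp [Bmat, Ne.symm hb]) (by simp)]
      simp [Bmat]
  simp only [hdiag, Fintype.sum_prod_type, dotProduct]
  rw [Finset.sum_eq_single i (fun b _ hb => by simp [hb]) (by simp)]
  simp only [if_true]

theorem fComp2_eq (n p : ℕ) [NeZero p] (L μ ξ : ℝ) (i : Fin n)
    (x : EuclideanSpace ℝ (Fin n × Fin p)) :
    fComp2 n p L μ ξ i x =
      1 / 2 * ((fun j => x (i, j)) ⬝ᵥ
          (((Real.sqrt n * L - n * μ) / 4) • Tmat p ξ + (n * μ) • 1) *ᵥ fun j => x (i, j))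
        - Pi.single 0 ((Real.sqrt n * L - n * μ) / 4) ⬝ᵥ fun j => x (i, j) := by
  rw [fComp2, sum_sum_mul_Amat_mul, sum_sum_mul_Bmat_mul, add_mulVec, smul_mulVec, smul_mulVec,
    one_mulVec, dotProduct_add, dotProduct_smul, dotProduct_smul, single_dotProduct, smul_eq_mul,
    smul_eq_mul]
  ring

theorem stmt4_general (n p : ℕ) [NeZero p]
    (L μ κ ξ q1 : ℝ) (hμ : 0 < μ) (hκ : κ = L / μ) (hκn : Real.sqrt n < κ)
    (hξ : ξ = (Real.sqrt κ + 3 * (n : ℝ) ^ ((1 : ℝ) / 4)) /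
        (Real.sqrt κ + (n : ℝ) ^ ((1 : ℝ) / 4)))
    (hq1 : q1 = (Real.sqrt κ - (n : ℝ) ^ ((1 : ℝ) / 4)) /
        (Real.sqrt κ + (n : ℝ) ^ ((1 : ℝ) / 4)))
    (F : EuclideanSpace ℝ (Fin n × Fin p) → ℝ)
    (hF : F = fun x => (1 / (n : ℝ)) * ∑ i : Fin n, fComp2 n p L μ ξ i x)
    (xstar : EuclideanSpace ℝ (Fin n × Fin p))
    (hxstar : ∀ (i : Fin n) (j : Fin p), xstar (i, j) = q1 ^ ((j : ℕ) + 1)) :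
    ∀ y : EuclideanSpace ℝ (Fin n × Fin p), F xstar ≤ F y := by
  set t := (n : ℝ) ^ ((1 : ℝ) / 4)
  set s := Real.sqrt κ
  set c := (Real.sqrt n * L - n * μ) / 4
  have ht0 : 0 ≤ t := by positivity
  have ht4 : t ^ 4 = n := by
    rw [← Real.rpow_natCast, ← Real.rpow_mul (Nat.cast_nonneg n)]; norm_num
  have ht2 : t ^ 2 = Real.sqrt n := by
    rw [← Real.sqrt_sq (by positivity : 0 ≤ t ^ 2), ← ht4]; ring_nf
  have hs2 : s ^ 2 = κ := Real.sq_sqrt ((Real.sqrt_nonneg _).trans hκn.le)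
  have hts : t < s := by nlinarith [Real.sqrt_nonneg κ]
  have hst : s + t ≠ 0 := by linarith
  have hc : c = μ * t ^ 2 * (s ^ 2 - t ^ 2) / 4 := by
    have hL : L = s ^ 2 * μ := by rw [hs2, hκ]; field_simp
    rw [show c = (Real.sqrt n * L - n * μ) / 4 from rfl, ← ht2, ← ht4, hL]; ring
  have hinner : c * (2 * q1 - 1 - q1 ^ 2) + n * μ * q1 = 0 := by
    rw [hc, hq1, ← ht4]; field_simp; ring
  have hlast : c * (ξ * q1 - 1) + n * μ * q1 = 0 := by
    rw [hc, hq1, hξ, ← ht4]; field_simp; ring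
  have hξ1 : 1 ≤ ξ := by rw [hξ, le_div_iff₀ (by linarith)]; linarith
  have hc0 : 0 ≤ c := by
    rw [hc]; exact div_nonneg (mul_nonneg (by positivity) (by nlinarith)) zero_le_four
  have hM : (c • Tmat p ξ + (n * μ) • 1).PosSemidef :=
    ((Tmat_posSemidef p hξ1).smul hc0).add (PosSemidef.one.smul (by positivity))
  have hxstar_block : ∀ i, (fun j => xstar (i, j)) = fun j : Fin p => q1 ^ ((j : ℕ) + 1) :=
    fun i => funext (hxstar i)
  intro y
  subst hF
  dsimp only
  gcongr with i
  rw [fComp2_eq, fComp2_eq, hxstar_block]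
  exact hM.quadratic_le_of_mulVec_eq (Tmat_mulVec_geometric hinner hlast) _

/-- The vector `x*` whose `((i−1)p+j)`-th coordinate is `q1^j`, with
`q1 = (√κ − n^{1/4})/(√κ + n^{1/4})`, is a global minimizer of `F = (1/n) ∑ f_i`
for the hard instance of Case (2). -/
theorem stmt4 (n p : ℕ) (hn : 2 ≤ n) [NeZero p] (hp : 1 ≤ p)
    (L μ κ ξ q1 : ℝ) (hμ : 0 < μ) (hL : 0 < L) (hκ : κ = L / μ) (hκn : Real.sqrt n < κ)
    (hξ : ξ = (Real.sqrt κ + 3 * (n : ℝ) ^ ((1 : ℝ) / 4)) /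
        (Real.sqrt κ + (n : ℝ) ^ ((1 : ℝ) / 4)))
    (hq1 : q1 = (Real.sqrt κ - (n : ℝ) ^ ((1 : ℝ) / 4)) /
        (Real.sqrt κ + (n : ℝ) ^ ((1 : ℝ) / 4)))
    (F : EuclideanSpace ℝ (Fin n × Fin p) → ℝ)
    (hF : F = fun x => (1 / (n : ℝ)) * ∑ i : Fin n, fComp2 n p L μ ξ i x)
    (xstar : EuclideanSpace ℝ (Fin n × Fin p))
    (hxstar : ∀ (i : Fin n) (j : Fin p), xstar (i, j) = q1 ^ ((j : ℕ) + 1)) :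
    ∀ y : EuclideanSpace ℝ (Fin n × Fin p), F xstar ≤ F y :=
  stmt4_general n p L μ κ ξ q1 hμ hκ hκn hξ hq1 F hF xstar hxstar
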